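/- A word u # v^inv (u, v ∈ {x,x̄}*) lies in WP(FIM_1) if and only if the path traced by the concatenated word u v^inv (reading u then v^inv, starting at 0) ends at 0, and its maximum value and its minimum value are each attained at least once within the prefix u (including at its end) and at least once within the suffix v^inv (including at its start). -/

import Mathlib

/-!
When `mu u = mu v`, the path of `u ++ winv v` runs along the path of `u` and then back along
the path of `v`, so the set of heights it visits is the union of the height sets of `u` and
`v`. The maximum of a union of two sets with maxima lies in both sets exactly when the two
maxima agree, and likewise for minima; this turns `nu u = nu v` and `lam u = lam v` into the
attainment conditions.
-/

/-- Step of a letter: `true` = x (+1), `false` = x̄ (-1). -/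
def step (b : Bool) : ℤ := if b then 1 else -1

/-- μ(w): endpoint of the path traced by `w` starting at 0. -/
def mu (w : List Bool) : ℤ := (w.map step).sum

/-- ν(w): maximum position visited (max of μ over prefixes). -/
def nu (w : List Bool) : ℤ := (w.inits.map mu).foldr max 0

/-- λ(w): negative of the minimum position visited. -/
def lam (w : List Bool) : ℤ := -((w.inits.map mu).foldr min 0)

/-- The formal inverse word: reverse and swap x ↔ x̄. -/
def winv (w : List Bool) : List Bool := w.reverse.map (fun b => !b)

theorem IsGreatest.eq_iff_mem_of_union {α : Type*} [LinearOrder α] {s t : Set α} {a b m : α}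
    (ha : IsGreatest s a) (hb : IsGreatest t b) (hm : IsGreatest (s ∪ t) m) :
    a = b ↔ m ∈ s ∧ m ∈ t := by
  obtain rfl : m = max a b := hm.unique (ha.union hb)
  constructor
  · rintro rfl
    simpa using ⟨ha.1, hb.1⟩
  · rintro ⟨hms, hmt⟩
    exact le_antisymm (le_max_left a b |>.trans (hb.2 hmt)) (le_max_right a b |>.trans (ha.2 hms))

theorem IsLeast.eq_iff_mem_of_union {α : Type*} [LinearOrder α] {s t : Set α} {a b m : α}
    (ha : IsLeast s a) (hb : IsLeast t b) (hm : IsLeast (s ∪ t) m) :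
    a = b ↔ m ∈ s ∧ m ∈ t :=
  IsGreatest.eq_iff_mem_of_union (α := αᵒᵈ) ha hb hm

theorem List.foldr_max_mem_cons {α : Type*} [LinearOrder α] (l : List α) (a : α) :
    l.foldr max a ∈ a :: l := by
  induction l with
  | nil => simp
  | cons y l ih =>
    rcases max_choice y (l.foldr max a) with h | h <;>
      simp only [List.foldr_cons, h, List.mem_cons] at ih ⊢ <;> tauto

theorem List.isGreatest_foldr_max {α : Type*} [LinearOrder α] {l : List α} {a : α}
    (ha : a ∈ l) :
    IsGreatest {x | x ∈ l} (l.foldr max a) := by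
  refine ⟨?_, fun x hx => List.le_max_of_le' a hx le_rfl⟩
  rcases List.mem_cons.mp (l.foldr_max_mem_cons a) with h | h
  · rwa [h]
  · exact h

theorem List.isLeast_foldr_min {α : Type*} [LinearOrder α] {l : List α} {a : α}
    (ha : a ∈ l) :
    IsLeast {x | x ∈ l} (l.foldr min a) :=
  List.isGreatest_foldr_max (α := αᵒᵈ) ha

lemma mu_append (u w : List Bool) : mu (u ++ w) = mu u + mu w := by
  simp [mu]

lemma winv_append (u w : List Bool) : winv (u ++ w) = winv w ++ winv u := by
  simp [winv]

lemma winv_winv (w : List Bool) : winv (winv w) = w := by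
  simp [winv, Function.comp_def]

lemma mu_winv (w : List Bool) : mu (winv w) = -mu w := by
  induction w with
  | nil => rfl
  | cons a w ih =>
    rw [← List.singleton_append, winv_append, mu_append, mu_append, ih]
    cases a <;> simp [winv, mu, step]

def heights (w : List Bool) : Set ℤ := {x | ∃ p, p <+: w ∧ mu p = x}

lemma heights_eq_mem_map_inits (w : List Bool) : heights w = {x | x ∈ w.inits.map mu} := by
  ext x
  simp [heights, List.mem_inits]

lemma zero_mem_map_inits (w : List Bool) : 0 ∈ w.inits.map mu :=
  List.mem_map.mpr ⟨[], (List.mem_inits _ _).mpr List.nil_prefix, rfl⟩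

lemma isGreatest_nu (w : List Bool) : IsGreatest (heights w) (nu w) := by
  rw [heights_eq_mem_map_inits]
  exact List.isGreatest_foldr_max (zero_mem_map_inits w)

lemma isLeast_neg_lam (w : List Bool) : IsLeast (heights w) (-lam w) := by
  rw [heights_eq_mem_map_inits, lam, neg_neg]
  exact List.isLeast_foldr_min (zero_mem_map_inits w)

lemma List.prefix_append_iff {α : Type*} {p u w : List α} :
    p <+: u ++ w ↔ p <+: u ∨ ∃ q, q <+: w ∧ p = u ++ q := by
  constructor
  · intro hp
    rcases List.prefix_or_prefix_of_prefix hp (u.prefix_append w) with h | ⟨q, rfl⟩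
    · exact .inl h
    · exact .inr ⟨q, (List.prefix_append_right_inj u).mp hp, rfl⟩
  · rintro (h | ⟨q, hq, rfl⟩)
    · exact h.trans (u.prefix_append w)
    · exact (List.prefix_append_right_inj u).mpr hq

lemma mem_add_image_heights_iff {u w : List Bool} {x : ℤ} :
    x ∈ (mu u + ·) '' heights w ↔ ∃ p, p <+: w ∧ mu (u ++ p) = x := by
  constructor
  · rintro ⟨_, ⟨p, hp, rfl⟩, rfl⟩
    exact ⟨p, hp, mu_append u p⟩
  · rintro ⟨p, hp, rfl⟩
    exact ⟨mu p, ⟨p, hp, rfl⟩, (mu_append u p).symm⟩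

lemma heights_append (u w : List Bool) :
    heights (u ++ w) = heights u ∪ (mu u + ·) '' heights w := by
  ext x
  rw [Set.mem_union, mem_add_image_heights_iff]
  simp only [heights, List.prefix_append_iff]
  grind

lemma heights_winv (v : List Bool) : heights (winv v) = (· - mu v) '' heights v := by
  ext x
  constructor
  · rintro ⟨p, ⟨r, hr⟩, rfl⟩
    have hv : v = winv r ++ winv p := by rw [← winv_append, hr, winv_winv]
    refine ⟨mu (winv r), ⟨winv r, ⟨winv p, hv.symm⟩, rfl⟩, ?_⟩
    simp only [hv, mu_append, mu_winv]
    ring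
  · rintro ⟨_, ⟨t, ⟨s, rfl⟩, rfl⟩, rfl⟩
    refine ⟨winv s, ⟨winv t, (winv_append t s).symm⟩, ?_⟩
    simp only [mu_winv, mu_append]
    ring

lemma add_image_heights_winv {u v : List Bool} (h : mu u = mu v) :
    (mu u + ·) '' heights (winv v) = heights v := by
  rw [heights_winv, Set.image_image, h]
  simp

lemma nu_eq_nu_iff {u v : List Bool} (h : mu u = mu v) :
    nu u = nu v ↔ (∃ p, p <+: u ∧ mu p = nu (u ++ winv v)) ∧
      (∃ p, p <+: winv v ∧ mu (u ++ p) = nu (u ++ winv v)) := by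
  have hw := isGreatest_nu (u ++ winv v)
  rw [heights_append, add_image_heights_winv h] at hw
  rw [← mem_add_image_heights_iff, add_image_heights_winv h]
  exact (isGreatest_nu u).eq_iff_mem_of_union (isGreatest_nu v) hw

lemma lam_eq_lam_iff {u v : List Bool} (h : mu u = mu v) :
    lam u = lam v ↔ (∃ p, p <+: u ∧ mu p = -lam (u ++ winv v)) ∧
      (∃ p, p <+: winv v ∧ mu (u ++ p) = -lam (u ++ winv v)) := by
  have hw := isLeast_neg_lam (u ++ winv v)
  rw [heights_append, add_image_heights_winv h] at hw
  rw [← mem_add_image_heights_iff, add_image_heights_winv h, ← neg_inj]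
  exact (isLeast_neg_lam u).eq_iff_mem_of_union (isLeast_neg_lam v) hw

/-- u # v^inv ∈ WP(FIM₁) iff the path of u·v^inv ends at 0 and its maximum
and minimum are each attained at least once within u (including its end) and
at least once within v^inv (including its start). -/
theorem stmt14 (u v : List Bool) :
    (lam u = lam v ∧ nu u = nu v ∧ mu u = mu v) ↔
    (mu (u ++ winv v) = 0 ∧
     (∃ p, p <+: u ∧ mu p = nu (u ++ winv v)) ∧
     (∃ p, p <+: winv v ∧ mu (u ++ p) = nu (u ++ winv v)) ∧
     (∃ p, p <+: u ∧ mu p = -lam (u ++ winv v)) ∧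
     (∃ p, p <+: winv v ∧ mu (u ++ p) = -lam (u ++ winv v))) := by
  rw [mu_append, mu_winv, ← sub_eq_add_neg, sub_eq_zero]
  constructor
  · rintro ⟨hl, hn, h⟩
    obtain ⟨hmax_u, hmax_v⟩ := (nu_eq_nu_iff h).mp hn
    obtain ⟨hmin_u, hmin_v⟩ := (lam_eq_lam_iff h).mp hl
    exact ⟨h, hmax_u, hmax_v, hmin_u, hmin_v⟩
  · rintro ⟨h, hmax_u, hmax_v, hmin_u, hmin_v⟩
    exact ⟨(lam_eq_lam_iff h).mpr ⟨hmin_u, hmin_v⟩,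
      (nu_eq_nu_iff h).mpr ⟨hmax_u, hmax_v⟩, h⟩
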